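/- Let (B_t)_{t≥0} be a standard Brownian motion, c ∈ (0,1), and ε ∈ (0,1). For T > 0 define S_{T,c} = sup_{0 ≤ s < t ≤ T, t − s < c} |B_t − B_s| / ω_{1/2}(t − s). If x > 0 satisfies P(S_{1,c} > x) ≤ ε, then P(S_{2,c} > x) ≥ (2 − ε) P(S_{1,c} > x). -/

import Mathlib

open MeasureTheory ProbabilityTheory
open scoped ENNReal

/-- `ℓ(t) = -log t` for `0 < t ≤ 1/3` and `ℓ(t) = log 3` for `t ≥ 1/3`. -/
noncomputable def ell (t : ℝ) : ℝ := if t ≤ 1/3 then -Real.log t else Real.log 3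

/-- `ω_q(t) = (t ℓ(t))^q` for `t > 0` and `ω_q(0) = 0`. -/
noncomputable def omegaQ (q t : ℝ) : ℝ := if t = 0 then 0 else (t * ell t) ^ q

/-- `B` is a standard Brownian motion on the probability space `(Ω, P)`. -/
def IsStdBM {Ω : Type*} [MeasurableSpace Ω] (P : Measure Ω) (B : ℝ → Ω → ℝ) : Prop :=
  (∀ t : ℝ, Measurable (B t)) ∧
  (∀ᵐ ω ∂P, ContinuousOn (fun t => B t ω) (Set.Ici (0:ℝ))) ∧
  (∀ᵐ ω ∂P, B 0 ω = 0) ∧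
  (∀ s t : ℝ, 0 ≤ s → s ≤ t →
    Measure.map (fun ω => B t ω - B s ω) P = gaussianReal 0 (Real.toNNReal (t - s))) ∧
  (∀ u : ℕ → ℝ, (∀ i, 0 ≤ u i) → Monotone u →
    iIndepFun (fun i ω => B (u (i+1)) ω - B (u i) ω) P)

/-- `S_{T,c}(ω) = sup_{0 ≤ s < t ≤ T, t - s < c} |B_t(ω) - B_s(ω)| / ω_{1/2}(t-s)`,
regarded as a `[0,∞]`-valued random variable. -/
noncomputable def Sbm {Ω : Type*} (B : ℝ → Ω → ℝ) (T c : ℝ) (ω : Ω) : ℝ≥0∞ :=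
  ⨆ (s : ℝ) (t : ℝ) (_ : 0 ≤ s) (_ : s < t) (_ : t ≤ T) (_ : t - s < c),
    ENNReal.ofReal (|B t ω - B s ω| / omegaQ (1/2) (t - s))

/-!
Let `A = {S_{1,c} > x}` and let `A'` be the same event for the path `t ↦ B (t + 1)`, so that
`A ∪ A' ⊆ {S_{2,c} > x}`. By continuity of the paths, `S_{1,c}` is the increasing limit of its
restrictions to the dyadic grids `2⁻ⁿℕ`, and on such a grid it is a measurable function of the
increments over `[0, 1]`; the event `A'` is the same function of the increments over `[1, 2]`.
These two blocks of increments are independent and identically distributed, hence so are `A` and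
`A'`, and with `p = P A ≤ ε` inclusion–exclusion gives `P (A ∪ A') = 2p - p² ≥ (2 - ε) p`.
-/

open Filter Set
open scoped Topology

lemma ell_eq_max {t : ℝ} (ht : 0 < t) : ell t = max (-Real.log t) (Real.log 3) := by
  have hlog3 : Real.log (1 / 3) = -Real.log 3 := by
    rw [one_div, Real.log_inv]
  unfold ell
  split_ifs with h
  · have := Real.log_le_log ht h
    rw [max_eq_left (by linarith)]
  · have := Real.log_le_log (by norm_num) (not_le.1 h).le
    rw [max_eq_right (by linarith)]

lemma omegaQ_pos {q t : ℝ} (ht : 0 < t) : 0 < omegaQ q t := by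
  have hell : 0 < ell t := by
    rw [ell_eq_max ht]
    exact lt_max_of_lt_right (Real.log_pos (by norm_num))
  rw [omegaQ, if_neg ht.ne']
  exact Real.rpow_pos_of_pos (mul_pos ht hell) _

lemma continuousAt_omegaQ {q t : ℝ} (ht : 0 < t) : ContinuousAt (omegaQ q) t := by
  have hmax : ContinuousAt (fun u : ℝ => (u * max (-Real.log u) (Real.log 3)) ^ q) t := by
    refine ContinuousAt.rpow_const ?_ (Or.inl ?_)
    · exact continuousAt_id.mul ((Real.continuousAt_log ht.ne').neg.max continuousAt_const)
    · exact (mul_pos ht (lt_max_of_lt_right (Real.log_pos (by norm_num)))).ne'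
  refine hmax.congr ?_
  filter_upwards [eventually_gt_nhds ht] with u hu
  rw [omegaQ, if_neg hu.ne', ell_eq_max hu]

noncomputable def incr (M : ℕ) (f : ℝ → ℝ) (j : ℕ) : ℝ := f ((j + 1 : ℕ) / M) - f (j / M)

-- `gridSup M c (incr M f)` is the supremum defining `S_{1,c}` for the path `f`, restricted to the
-- grid `M⁻¹ℕ`; writing it in the increments `y` makes it a function of `(y j)_{j < M}` only.
noncomputable def gridSup (M : ℕ) (c : ℝ) (y : ℕ → ℝ) : ℝ≥0∞ :=
  ⨆ (a : ℕ) (b : ℕ) (_ : a < b) (_ : b ≤ M) (_ : ((b : ℝ) - a) / M < c),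
    ENNReal.ofReal (|∑ j ∈ Finset.Ico a b, y j| / omegaQ (1 / 2) (((b : ℝ) - a) / M))

lemma sum_Ico_incr (M : ℕ) (f : ℝ → ℝ) {a b : ℕ} (hab : a ≤ b) :
    ∑ j ∈ Finset.Ico a b, incr M f j = f (b / M) - f (a / M) :=
  Finset.sum_Ico_sub (fun j : ℕ => f (j / M)) hab

lemma incr_comp_add_one {M : ℕ} (hM : M ≠ 0) (f : ℝ → ℝ) :
    incr M (fun t => f (t + 1)) = fun j => incr M f (M + j) := by
  have hM' : (M : ℝ) ≠ 0 := Nat.cast_ne_zero.2 hM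
  ext j
  simp only [incr]
  push_cast
  congr 2 <;> field_simp <;> ring

lemma gridSup_incr_le_Sbm {Ω : Type*} (B : ℝ → Ω → ℝ) (ω : Ω) (M : ℕ) {c d T : ℝ}
    (hd : 0 ≤ d) (hT : d + 1 ≤ T) :
    gridSup M c (incr M fun t => B (t + d) ω) ≤ Sbm B T c ω := by
  refine iSup_le fun a => iSup_le fun b => iSup_le fun hab => iSup_le fun hbM =>
    iSup_le fun hc => ?_
  have hM : (0 : ℝ) < M := Nat.cast_pos.2 (by omega)
  have hab' : (a : ℝ) / M < b / M := div_lt_div_of_pos_right (by exact_mod_cast hab) hM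
  have hb1 : (b : ℝ) / M ≤ 1 := (div_le_one hM).2 (by exact_mod_cast hbM)
  rw [sum_Ico_incr M _ hab.le, sub_div] at *
  refine le_iSup_of_le (a / M + d) <| le_iSup_of_le (b / M + d) <|
    le_iSup_of_le (by positivity) <| le_iSup_of_le (by linarith) <|
    le_iSup_of_le (by linarith) <| le_iSup_of_le (by linarith) (le_of_eq ?_)
  rw [add_sub_add_right_eq_sub]

lemma gridSup_incr_le_mul {M k : ℕ} (hk : k ≠ 0) (c : ℝ) (f : ℝ → ℝ) :
    gridSup M c (incr M f) ≤ gridSup (k * M) c (incr (k * M) f) := by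
  have hk' : (k : ℝ) ≠ 0 := Nat.cast_ne_zero.2 hk
  have hscale : ∀ n : ℕ, ((k * n : ℕ) : ℝ) / ((k * M : ℕ) : ℝ) = n / M := fun n => by
    push_cast; exact mul_div_mul_left _ _ hk'
  refine iSup_le fun a => iSup_le fun b => iSup_le fun hab => iSup_le fun hbM =>
    iSup_le fun hc => ?_
  have hab2 : k * a < k * b := Nat.mul_lt_mul_of_pos_left hab (Nat.pos_of_ne_zero hk)
  rw [sum_Ico_incr M _ hab.le, sub_div] at *
  refine le_iSup_of_le (k * a) <| le_iSup_of_le (k * b) <| le_iSup_of_le hab2 <|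
    le_iSup_of_le (Nat.mul_le_mul_left k hbM) <| le_iSup_of_le ?_ (le_of_eq ?_)
  · rwa [sub_div, hscale, hscale]
  · rw [sum_Ico_incr _ _ hab2.le, sub_div, hscale, hscale]

lemma ContinuousOn.tendsto_ofReal_abs_sub_div_omegaQ {f : ℝ → ℝ} (hf : ContinuousOn f (Ici 0))
    {q s t : ℝ} {u v : ℕ → ℝ} (hu : Tendsto u atTop (𝓝 s)) (hv : Tendsto v atTop (𝓝 t))
    (hu₀ : ∀ n, 0 ≤ u n) (hv₀ : ∀ n, 0 ≤ v n) (hst : s < t) :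
    Tendsto (fun n => ENNReal.ofReal (|f (v n) - f (u n)| / omegaQ q (v n - u n))) atTop
      (𝓝 (ENNReal.ofReal (|f t - f s| / omegaQ q (t - s)))) := by
  have hcomp : ∀ {w : ℕ → ℝ} {r : ℝ}, Tendsto w atTop (𝓝 r) → (∀ n, 0 ≤ w n) →
      Tendsto (fun n => f (w n)) atTop (𝓝 (f r)) := fun {w r} hw hw₀ =>
    (hf r (ge_of_tendsto' hw hw₀)).tendsto.comp
      (tendsto_nhdsWithin_iff.2 ⟨hw, Eventually.of_forall hw₀⟩)
  have hts : 0 < t - s := sub_pos.2 hst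
  exact (ENNReal.continuous_ofReal.tendsto _).comp <| ((hcomp hv hv₀).sub (hcomp hu hu₀)).abs.div
    ((continuousAt_omegaQ hts).tendsto.comp (hv.sub hu)) (omegaQ_pos hts).ne'

lemma Sbm_one_le_iSup_gridSup {Ω : Type*} {B : ℝ → Ω → ℝ} {ω : Ω} (c : ℝ)
    (hω : ContinuousOn (fun t => B t ω) (Ici 0)) :
    Sbm B 1 c ω ≤ ⨆ n : ℕ, gridSup (2 ^ n) c (incr (2 ^ n) fun t => B t ω) := by
  refine iSup_le fun s => iSup_le fun t => iSup_le fun hs => iSup_le fun hst =>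
    iSup_le fun ht1 => iSup_le fun htc => ?_
  set a : ℕ → ℕ := fun n => ⌈s * 2 ^ n⌉₊
  set b : ℕ → ℕ := fun n => ⌊t * 2 ^ n⌋₊
  have hpow : Tendsto (fun n : ℕ => (2 : ℝ) ^ n) atTop atTop :=
    tendsto_pow_atTop_atTop_of_one_lt one_lt_two
  have ha : Tendsto (fun n => (a n : ℝ) / 2 ^ n) atTop (𝓝 s) :=
    (tendsto_nat_ceil_mul_div_atTop hs).comp hpow
  have hb : Tendsto (fun n => (b n : ℝ) / 2 ^ n) atTop (𝓝 t) :=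
    (tendsto_nat_floor_mul_div_atTop (hs.trans hst.le)).comp hpow
  have hsa : ∀ n, s ≤ a n / 2 ^ n := fun n =>
    (le_div_iff₀ (by positivity)).2 (Nat.le_ceil _)
  have hbt : ∀ n, (b n : ℝ) / 2 ^ n ≤ t := fun n =>
    (div_le_iff₀ (by positivity)).2 (Nat.floor_le (mul_nonneg (hs.trans hst.le) (by positivity)))
  have hval := hω.tendsto_ofReal_abs_sub_div_omegaQ (q := 1 / 2) ha hb
    (fun n => hs.trans (hsa n)) (fun n => by positivity) hst
  refine le_of_tendsto hval ?_
  filter_upwards [(hb.sub ha).eventually (lt_mem_nhds (sub_pos.2 hst))] with n hn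
  have hab : a n < b n := by
    rw [sub_pos, div_lt_div_iff_of_pos_right (by positivity)] at hn
    exact_mod_cast hn
  have hbM : b n ≤ 2 ^ n := by
    have : (b n : ℝ) ≤ 2 ^ n := (div_le_one (by positivity)).1 ((hbt n).trans ht1)
    exact_mod_cast this
  refine le_iSup_of_le n <| le_iSup_of_le (a n) <| le_iSup_of_le (b n) <|
    le_iSup_of_le hab <| le_iSup_of_le hbM <| le_iSup_of_le ?_ (le_of_eq ?_)
  · push_cast
    rw [sub_div]
    linarith [hsa n, hbt n]
  · rw [sum_Ico_incr _ _ hab.le]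
    push_cast
    rw [sub_div]

lemma Sbm_one_eq_iSup_gridSup {Ω : Type*} {B : ℝ → Ω → ℝ} {ω : Ω} (c : ℝ)
    (hω : ContinuousOn (fun t => B t ω) (Ici 0)) :
    Sbm B 1 c ω = ⨆ n : ℕ, gridSup (2 ^ n) c (incr (2 ^ n) fun t => B t ω) :=
  (Sbm_one_le_iSup_gridSup c hω).antisymm <| iSup_le fun n => by
    simpa only [add_zero] using gridSup_incr_le_Sbm B ω (2 ^ n) le_rfl (zero_add 1).le

lemma monotone_gridSup_incr_two_pow (c : ℝ) (f : ℝ → ℝ) :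
    Monotone fun n : ℕ => gridSup (2 ^ n) c (incr (2 ^ n) f) :=
  monotone_nat_of_le_succ fun n => by
    simpa only [pow_succ'] using gridSup_incr_le_mul two_ne_zero c f

lemma measurable_gridSup {α : Type*} {m : MeasurableSpace α} {M : ℕ} (c : ℝ)
    {Y : ℕ → α → ℝ} (hY : ∀ j < M, Measurable (Y j)) :
    Measurable fun ω => gridSup M c fun j => Y j ω := by
  refine Measurable.iSup fun a => Measurable.iSup fun b => Measurable.iSup_Prop _ ?_
  by_cases hbM : b ≤ M
  swap; · simp only [hbM, iSup_false, measurable_const]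
  simp only [hbM, iSup_pos]
  refine Measurable.iSup_Prop _ ?_
  refine ENNReal.measurable_ofReal.comp ((Finset.measurable_sum _ fun j hj => ?_).abs.div_const _)
  exact hY j ((Finset.mem_Ico.1 hj).2.trans_le hbM)

lemma iIndepFun.map_comp_add_left {Ω β : Type*} [MeasurableSpace Ω] [MeasurableSpace β]
    {P : Measure Ω} [IsProbabilityMeasure P] {X : ℕ → Ω → β} (hX : ∀ j, Measurable (X j))
    (hind : iIndepFun X P) (hid : ∀ j, P.map (X j) = P.map (X 0)) (k : ℕ) :
    P.map (fun ω j => X (k + j) ω) = P.map (fun ω j => X j ω) := by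
  have hshift := (hind.precomp (add_right_injective k)).map_fun_eq_infinitePi_map
    fun j => hX (k + j)
  rw [hshift, hind.map_fun_eq_infinitePi_map hX]
  simp only [hid]

lemma iIndepFun.measure_inter_gridSup_add_left {Ω : Type*} [MeasurableSpace Ω]
    {P : Measure Ω} [IsProbabilityMeasure P] {X : ℕ → Ω → ℝ} (hX : ∀ j, Measurable (X j))
    (hind : iIndepFun X P) (M : ℕ) (c : ℝ) (r : ℝ≥0∞) :
    P ({ω | r < gridSup M c fun j => X j ω} ∩ {ω | r < gridSup M c fun j => X (M + j) ω}) =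
      P {ω | r < gridSup M c fun j => X j ω} * P {ω | r < gridSup M c fun j => X (M + j) ω} := by
  set σX : ℕ → MeasurableSpace Ω := fun j => MeasurableSpace.comap (X j) inferInstance
  have hσX : ∀ {S : Set ℕ} {j}, j ∈ S → Measurable[⨆ i ∈ S, σX i] (X j) := fun hj =>
    Measurable.of_comap_le (le_iSup₂ (f := fun i (_ : i ∈ _) => σX i) _ hj)
  have hindep : Indep (⨆ i ∈ Iio M, σX i) (⨆ i ∈ Ici M, σX i) P :=
    indep_iSup_of_disjoint (fun j => (hX j).comap_le) hind
      (Set.disjoint_left.2 fun j hj hj' => (not_le.2 (mem_Iio.1 hj)) (mem_Ici.1 hj'))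
  refine (Indep_iff _ _ _).1 hindep _ _ ?_ ?_
  · exact measurableSet_lt measurable_const
      (measurable_gridSup c fun j hj => hσX (mem_Iio.2 hj))
  · exact measurableSet_lt measurable_const
      (measurable_gridSup c fun j _ => hσX (mem_Ici.2 (Nat.le_add_right M j)))

section BrownianMotion

variable {Ω : Type*} [MeasurableSpace Ω] {P : Measure Ω} {B : ℝ → Ω → ℝ}

lemma IsStdBM.measurable_incr (hB : IsStdBM P B) (M j : ℕ) :
    Measurable fun ω => incr M (fun t => B t ω) j :=
  (hB.1 _).sub (hB.1 _)

lemma IsStdBM.iIndepFun_incr (hB : IsStdBM P B) (M : ℕ) :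
    iIndepFun (fun j ω => incr M (fun t => B t ω) j) P :=
  hB.2.2.2.2 (fun j => (j : ℝ) / M) (fun j => by positivity) fun i j hij => by
    dsimp only; gcongr

lemma IsStdBM.map_incr (hB : IsStdBM P B) (M j : ℕ) :
    P.map (fun ω => incr M (fun t => B t ω) j) = gaussianReal 0 ((M : ℝ)⁻¹).toNNReal := by
  rw [show (M : ℝ)⁻¹ = ((j + 1 : ℕ) : ℝ) / M - j / M by push_cast; ring]
  exact hB.2.2.2.1 _ _ (by positivity) (by gcongr; omega)

variable [IsProbabilityMeasure P]

lemma IsStdBM.measure_gridSup_comp_add_one (hB : IsStdBM P B) {M : ℕ} (hM : M ≠ 0) (c : ℝ)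
    (r : ℝ≥0∞) :
    P {ω | r < gridSup M c (incr M fun t => B (t + 1) ω)} =
      P {ω | r < gridSup M c (incr M fun t => B t ω)} := by
  have hU : MeasurableSet {y : ℕ → ℝ | r < gridSup M c y} :=
    measurableSet_lt measurable_const (measurable_gridSup c fun j _ => measurable_pi_apply j)
  have hY : ∀ k : ℕ → ℕ, Measurable fun ω j => incr M (fun t => B t ω) (k j) := fun k =>
    measurable_pi_lambda _ fun j => hB.measurable_incr M (k j)
  have hlaw := congrArg (fun μ => μ {y : ℕ → ℝ | r < gridSup M c y})
    (iIndepFun.map_comp_add_left (hB.measurable_incr M) (hB.iIndepFun_incr M)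
      (fun j => by rw [hB.map_incr, hB.map_incr]) M)
  simp only [Measure.map_apply (hY _) hU] at hlaw
  simp only [fun ω => incr_comp_add_one hM fun t => B t ω]
  exact hlaw

lemma IsStdBM.measure_inter_gridSup_comp_add_one (hB : IsStdBM P B) {M : ℕ} (hM : M ≠ 0)
    (c : ℝ) (r : ℝ≥0∞) :
    P ({ω | r < gridSup M c (incr M fun t => B t ω)} ∩
        {ω | r < gridSup M c (incr M fun t => B (t + 1) ω)}) =
      P {ω | r < gridSup M c (incr M fun t => B t ω)} *
        P {ω | r < gridSup M c (incr M fun t => B (t + 1) ω)} := by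
  simp only [fun ω => incr_comp_add_one hM fun t => B t ω]
  exact iIndepFun.measure_inter_gridSup_add_left (hB.measurable_incr M) (hB.iIndepFun_incr M)
    M c r

end BrownianMotion

lemma measure_iUnion_inter_iUnion_eq_mul {Ω : Type*} [MeasurableSpace Ω] {μ : Measure Ω}
    [IsFiniteMeasure μ] {E E' : ℕ → Set Ω} (hE : Monotone E) (hE' : Monotone E')
    (h : ∀ n, μ (E n ∩ E' n) = μ (E n) * μ (E' n)) :
    μ ((⋃ n, E n) ∩ ⋃ n, E' n) = μ (⋃ n, E n) * μ (⋃ n, E' n) := by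
  rw [← iUnion_inter_of_monotone hE hE']
  refine tendsto_nhds_unique (tendsto_measure_iUnion_atTop (hE.inter hE')) ?_
  simp only [Function.comp_def, h]
  exact ENNReal.Tendsto.mul (tendsto_measure_iUnion_atTop hE) (Or.inr (measure_ne_top _ _))
    (tendsto_measure_iUnion_atTop hE') (Or.inr (measure_ne_top _ _))

lemma ofReal_two_sub_mul_le_measure_union {Ω : Type*} [MeasurableSpace Ω] {μ : Measure Ω}
    [IsFiniteMeasure μ] {A A' : Set Ω} (hA' : MeasurableSet A') (hlaw : μ A' = μ A)
    (hindep : μ (A ∩ A') = μ A * μ A') {ε : ℝ} (hε₀ : 0 ≤ ε) (hε₂ : ε ≤ 2)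
    (htail : μ A ≤ ENNReal.ofReal ε) :
    ENNReal.ofReal (2 - ε) * μ A ≤ μ (A ∪ A') := by
  have hincl : μ (A ∪ A') + μ A * μ A = μ A + μ A := by
    have := measure_union_add_inter (μ := μ) A hA'
    rwa [hindep, hlaw] at this
  refine (ENNReal.add_le_add_iff_right (ENNReal.mul_ne_top (measure_ne_top μ A)
    (measure_ne_top μ A))).1 ?_
  calc ENNReal.ofReal (2 - ε) * μ A + μ A * μ A
      = (ENNReal.ofReal (2 - ε) + μ A) * μ A := by rw [add_mul]
    _ ≤ (ENNReal.ofReal (2 - ε) + ENNReal.ofReal ε) * μ A := by gcongr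
    _ = μ A + μ A := by
      rw [← ENNReal.ofReal_add (by linarith) hε₀, sub_add_cancel, ENNReal.ofReal_ofNat, two_mul]
    _ = μ (A ∪ A') + μ A * μ A := hincl.symm

theorem Sbm_two_ge_of_tail_small_general {Ω : Type*} [MeasurableSpace Ω] (P : Measure Ω)
    [IsProbabilityMeasure P] (B : ℝ → Ω → ℝ) (hB : IsStdBM P B)
    (c : ℝ) (ε : ℝ) (hε : ε ∈ Set.Ioo (0:ℝ) 1)
    (x : ℝ)
    (htail : P {ω | Sbm B 1 c ω > ENNReal.ofReal x} ≤ ENNReal.ofReal ε) :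
    P {ω | Sbm B 2 c ω > ENNReal.ofReal x}
      ≥ ENNReal.ofReal (2 - ε) * P {ω | Sbm B 1 c ω > ENNReal.ofReal x} := by
  set E : ℕ → Set Ω := fun n =>
    {ω | ENNReal.ofReal x < gridSup (2 ^ n) c (incr (2 ^ n) fun t => B t ω)}
  set E' : ℕ → Set Ω := fun n =>
    {ω | ENNReal.ofReal x < gridSup (2 ^ n) c (incr (2 ^ n) fun t => B (t + 1) ω)}
  have hE : Monotone E := fun m n h ω hω => hω.trans_le (monotone_gridSup_incr_two_pow c _ h)
  have hE' : Monotone E' := fun m n h ω hω => hω.trans_le (monotone_gridSup_incr_two_pow c _ h)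
  have hA : {ω | Sbm B 1 c ω > ENNReal.ofReal x} =ᵐ[P] ⋃ n, E n := by
    refine eventuallyEq_set.2 ?_
    filter_upwards [hB.2.1] with ω hω
    simp only [mem_ofPred_eq, mem_iUnion, E, gt_iff_lt, Sbm_one_eq_iSup_gridSup c hω, lt_iSup_iff]
  have hsub : (⋃ n, E n) ∪ ⋃ n, E' n ⊆ {ω | Sbm B 2 c ω > ENNReal.ofReal x} := by
    rintro ω (hω | hω) <;> obtain ⟨n, hn⟩ := mem_iUnion.1 hω
    · have hle := gridSup_incr_le_Sbm B ω (2 ^ n) (c := c) (T := 2) le_rfl (by norm_num)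
      simp only [add_zero] at hle
      exact hn.trans_le hle
    · exact hn.trans_le (gridSup_incr_le_Sbm B ω (2 ^ n) zero_le_one one_add_one_eq_two.le)
  rw [measure_congr hA] at htail ⊢
  refine (ofReal_two_sub_mul_le_measure_union ?_ ?_ ?_ hε.1.le (by linarith [hε.2]) htail).trans
    (measure_mono hsub)
  · exact MeasurableSet.iUnion fun n => measurableSet_lt measurable_const
      (measurable_gridSup c fun j _ => (hB.1 _).sub (hB.1 _))
  · rw [hE.measure_iUnion, hE'.measure_iUnion]
    exact iSup_congr fun n => hB.measure_gridSup_comp_add_one (by positivity) c _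
  · exact measure_iUnion_inter_iUnion_eq_mul hE hE' fun n =>
      hB.measure_inter_gridSup_comp_add_one (by positivity) c _

/-- for a standard Brownian motion `B`, `c ∈ (0,1)` and `ε ∈ (0,1)`, if
`x > 0` satisfies `P(S_{1,c} > x) ≤ ε` then `P(S_{2,c} > x) ≥ (2 - ε) P(S_{1,c} > x)`. -/
theorem Sbm_two_ge_of_tail_small {Ω : Type*} [MeasurableSpace Ω] (P : Measure Ω)
    [IsProbabilityMeasure P] (B : ℝ → Ω → ℝ) (hB : IsStdBM P B)
    (c : ℝ) (hc : c ∈ Set.Ioo (0:ℝ) 1) (ε : ℝ) (hε : ε ∈ Set.Ioo (0:ℝ) 1)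
    (x : ℝ) (hx : 0 < x)
    (htail : P {ω | Sbm B 1 c ω > ENNReal.ofReal x} ≤ ENNReal.ofReal ε) :
    P {ω | Sbm B 2 c ω > ENNReal.ofReal x}
      ≥ ENNReal.ofReal (2 - ε) * P {ω | Sbm B 1 c ω > ENNReal.ofReal x} :=
  Sbm_two_ge_of_tail_small_general P B hB c ε hε x htail
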